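/- arXiv:2307.02130 — 7 statements merged into one kernel-verified Lean document; each statement's English description precedes it below -/
import Mathlib

section
/- Let Θ̂ be a symmetric positive definite matrix that minimizes Φ(·, λ) over the set of symmetric positive definite p×p matrices. Then for all indices i, j: if Θ̂_{ij} ≠ 0 then (Θ̂⁻¹)_{ij} − S_{ij} = λ·sign(Θ̂_{ij}), and if Θ̂_{ij} = 0 then |(Θ̂⁻¹)_{ij} − S_{ij}| ≤ λ. -/
/-!
Perturb `Θhat` along `E = symmSingle i j`, the symmetric 0/1 matrix supported on `(i, j)` and
`(j, i)`. Positive definiteness survives small symmetric perturbations (compactness of the unit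
sphere), so `t ↦ Φ(Θhat + t E, λ)` has a local minimum at `0`. Every entry changed by `E` equals
`Θhat i j + t`, so up to a constant this function is
`-log det (Θhat + t E) + κ S i j t + λ κ |Θhat i j + t|`, where `κ ∈ {1, 2}` is the number of ones
in `E`, and the first term has derivative `-tr (Θhat⁻¹ E) = -κ (Θhat⁻¹) i j` at `0`. The
first-order conditions for `g t + μ |a + t|` at a local minimum (`g' 0 = -μ sign a` if `a ≠ 0`,
`|g' 0| ≤ μ` from the one-sided slopes if `a = 0`) give the claim after dividing by `κ`.
-/

open Matrix

/-- The GLASSO objective `Φ(Θ, λ) = −log det Θ + ⟨S, Θ⟩ + λ ‖Θ‖₁`. -/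
noncomputable def glassoObj {p : ℕ} (S Θ : Matrix (Fin p) (Fin p) ℝ) (lam : ℝ) : ℝ :=
  -Real.log Θ.det + (∑ i, ∑ j, S i j * Θ i j) + lam * ∑ i, ∑ j, |Θ i j|

open Filter Topology

theorem IsLocalMin.neg_le_of_hasDerivAt_add_mul_abs {g : ℝ → ℝ} {d μ : ℝ} (hg : HasDerivAt g d 0)
    (hmin : IsLocalMin (fun t => g t + μ * |t|) 0) : -μ ≤ d := by
  refine ge_of_tendsto hg.tendsto_slope_zero_right ?_
  filter_upwards [nhdsWithin_le_nhds hmin, self_mem_nhdsWithin] with t hle (ht : 0 < t)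
  rw [zero_add, smul_eq_mul, le_inv_mul_iff₀ ht]
  simp only [abs_zero, mul_zero, add_zero, abs_of_pos ht] at hle
  linarith

theorem IsLocalMin.abs_le_of_hasDerivAt_add_mul_abs {g : ℝ → ℝ} {d μ : ℝ} (hg : HasDerivAt g d 0)
    (hmin : IsLocalMin (fun t => g t + μ * |t|) 0) : |d| ≤ μ := by
  have hmin' : IsLocalMin (fun t => g (-t) + μ * |t|) 0 := by
    simpa [Function.comp_def] using
      (show IsLocalMin (fun t => g t + μ * |t|) (-0) by simpa using hmin).comp_continuous
        continuous_neg.continuousAt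
  have hg' : HasDerivAt (fun t => g (-t)) (-d) 0 := by
    simpa [Function.comp_def] using
      (show HasDerivAt g d (-0) by simpa using hg).comp (0 : ℝ) (hasDerivAt_neg 0)
  have hneg := hmin'.neg_le_of_hasDerivAt_add_mul_abs hg'
  exact abs_le.2 ⟨hmin.neg_le_of_hasDerivAt_add_mul_abs hg, by linarith⟩

theorem eventually_abs_add_eq {a : ℝ} (ha : a ≠ 0) :
    ∀ᶠ t in 𝓝 (0 : ℝ), |a + t| = |a| + Real.sign a * t := by
  rcases ha.lt_or_gt with ha | ha
  · filter_upwards [Iio_mem_nhds (neg_pos.2 ha)] with t (ht : t < -a)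
    rw [abs_of_neg ha, abs_of_neg (by linarith), Real.sign_of_neg ha]; ring
  · filter_upwards [Ioi_mem_nhds (neg_neg_iff_pos.2 ha)] with t (ht : -a < t)
    rw [abs_of_pos ha, abs_of_pos (by linarith), Real.sign_of_pos ha]; ring

theorem IsLocalMin.add_mul_sign_eq_zero_of_hasDerivAt {g : ℝ → ℝ} {d μ a : ℝ}
    (hg : HasDerivAt g d 0) (hmin : IsLocalMin (fun t => g t + μ * |a + t|) 0) (ha : a ≠ 0) :
    d + μ * Real.sign a = 0 := by
  have hlin : IsLocalMin (fun t => g t + μ * Real.sign a * t + μ * |a|) 0 :=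
    hmin.congr <| (eventually_abs_add_eq ha).mono fun t ht => by simp only [ht]; ring
  refine hlin.hasDerivAt_eq_zero ?_
  simpa using ((hg.add ((hasDerivAt_id (0 : ℝ)).const_mul (μ * Real.sign a))).add_const (μ * |a|))

section

variable {n : Type*} [Fintype n]

theorem Matrix.PosDef.eventually_posDef_add_smul {A H : Matrix n n ℝ} (hA : A.PosDef)
    (hH : H.IsHermitian) : ∀ᶠ t in 𝓝 (0 : ℝ), (A + t • H).PosDef := by
  have hsphere : ∀ᶠ t in 𝓝 (0 : ℝ), ∀ x ∈ Metric.sphere (0 : n → ℝ) 1,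
      0 < x ⬝ᵥ (A + t • H) *ᵥ x := by
    refine (isCompact_sphere 0 1).eventually_forall_of_forall_eventually fun x hx => ?_
    have hcont : Continuous fun z : ℝ × (n → ℝ) => z.2 ⬝ᵥ (A + z.1 • H) *ᵥ z.2 := by fun_prop
    have hx0 : x ≠ 0 := ne_zero_of_mem_sphere one_ne_zero ⟨x, hx⟩
    refine continuousAt_const.eventually_lt hcont.continuousAt ?_
    simpa using hA.dotProduct_mulVec_pos hx0
  filter_upwards [hsphere] with t ht
  refine .of_dotProduct_mulVec_pos (hA.1.add (hH.smul (IsSelfAdjoint.all t))) fun x hx => ?_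
  have hu : ‖x‖⁻¹ • x ∈ Metric.sphere (0 : n → ℝ) 1 := by
    simp [norm_smul, hx]
  have hxu := ht _ hu
  rw [mulVec_smul, dotProduct_smul, smul_dotProduct, smul_eq_mul, smul_eq_mul,
    ← mul_assoc] at hxu
  rw [star_trivial]
  exact pos_of_mul_pos_right hxu (by positivity)

variable [DecidableEq n]

theorem Matrix.hasDerivAt_det_one_add_smul (M : Matrix n n ℝ) :
    HasDerivAt (fun t : ℝ => (1 + t • M).det) M.trace 0 := by
  set P := (det (1 + (Polynomial.X : Polynomial ℝ) • M.map Polynomial.C)).divX.divX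
  have hP : HasDerivAt (fun t : ℝ => P.eval t * t ^ 2) 0 0 := by
    simpa using (P.hasDerivAt 0).fun_mul (hasDerivAt_pow 2 (0 : ℝ))
  rw [show (fun t : ℝ => (1 + t • M).det) = fun t => 1 + M.trace * t + P.eval t * t ^ 2 from
    funext fun t => det_one_add_smul t M]
  simpa using (((hasDerivAt_id (0 : ℝ)).const_mul M.trace).const_add 1).fun_add hP

theorem Matrix.hasDerivAt_log_det_add_smul {A : Matrix n n ℝ} (hA : A.det ≠ 0)
    (H : Matrix n n ℝ) :
    HasDerivAt (fun t : ℝ => Real.log (A + t • H).det) (A⁻¹ * H).trace 0 := by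
  have hfac : ∀ t : ℝ, (A + t • H).det = A.det * (1 + t • (A⁻¹ * H)).det := fun t => by
    rw [← det_mul, mul_add, mul_one, mul_smul_comm, mul_nonsing_inv_cancel_left _ _
      (isUnit_iff_ne_zero.2 hA)]
  simp_rw [hfac]
  simpa [hA] using ((hasDerivAt_det_one_add_smul (A⁻¹ * H)).const_mul A.det).log (by simpa using hA)

end

section

variable {n : Type*} [DecidableEq n]

def symmSingle (i j : n) : Matrix n n ℝ :=
  of fun k l => if (k = i ∧ l = j) ∨ (k = j ∧ l = i) then 1 else 0

theorem symmSingle_apply (i j k l : n) :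
    symmSingle i j k l = if (k = i ∧ l = j) ∨ (k = j ∧ l = i) then 1 else 0 := rfl

theorem symmSingle_apply_comm (i j k l : n) : symmSingle i j l k = symmSingle i j k l := by
  simp only [symmSingle_apply, or_comm, and_comm]

theorem isHermitian_symmSingle (i j : n) : (symmSingle i j).IsHermitian :=
  ext fun k l => by simpa using symmSingle_apply_comm i j k l

variable [Fintype n]

theorem sum_sum_symmSingle_pos (i j : n) : 0 < ∑ k, ∑ l, symmSingle i j k l := by
  have hnonneg : ∀ k l, 0 ≤ symmSingle i j k l := fun k l => by
    rw [symmSingle_apply]; split_ifs <;> norm_num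
  calc (0 : ℝ) < symmSingle i j i j := by simp [symmSingle_apply]
    _ ≤ ∑ l, symmSingle i j i l :=
      Finset.single_le_sum (fun l _ => hnonneg i l) (Finset.mem_univ j)
    _ ≤ ∑ k, ∑ l, symmSingle i j k l :=
      Finset.single_le_sum (f := fun k => ∑ l, symmSingle i j k l)
        (fun k _ => Finset.sum_nonneg fun l _ => hnonneg k l) (Finset.mem_univ i)

theorem sum_sum_symmSingle_mul {f : n → n → ℝ} (hf : ∀ k l, f l k = f k l) (i j : n) :
    ∑ k, ∑ l, symmSingle i j k l * f k l = (∑ k, ∑ l, symmSingle i j k l) * f i j := by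
  simp_rw [Finset.sum_mul]
  refine Finset.sum_congr rfl fun k _ => Finset.sum_congr rfl fun l _ => ?_
  rw [symmSingle_apply]
  split_ifs with h
  · rcases h with ⟨rfl, rfl⟩ | ⟨rfl, rfl⟩ <;> simp [hf]
  · simp

theorem Matrix.IsSymm.trace_mul_symmSingle {A : Matrix n n ℝ} (hA : A.IsSymm) (i j : n) :
    (A * symmSingle i j).trace = (∑ k, ∑ l, symmSingle i j k l) * A i j := by
  simp only [trace, diag_apply, mul_apply, symmSingle_apply_comm, mul_comm (A _ _)]
  exact sum_sum_symmSingle_mul hA.apply i j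

theorem Matrix.IsSymm.sum_abs_add_smul_symmSingle {A : Matrix n n ℝ} (hA : A.IsSymm)
    (i j : n) (t : ℝ) :
    ∑ k, ∑ l, |(A + t • symmSingle i j) k l|
      = ∑ k, ∑ l, |A k l| + (∑ k, ∑ l, symmSingle i j k l) * (|A i j + t| - |A i j|) := by
  have hterm : ∀ k l, |(A + t • symmSingle i j) k l|
      = |A k l| + symmSingle i j k l * (|A k l + t| - |A k l|) := fun k l => by
    simp only [Matrix.add_apply, Matrix.smul_apply, smul_eq_mul, symmSingle_apply]
    split_ifs <;> ring_nf
  simp only [hterm, Finset.sum_add_distrib]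
  rw [sum_sum_symmSingle_mul (fun k l => by rw [hA.apply])]

end

theorem glassoObj_add_smul_symmSingle {p : ℕ} {S Θ : Matrix (Fin p) (Fin p) ℝ} (hS : S.IsSymm)
    (hΘ : Θ.IsSymm) (lam t : ℝ) (i j : Fin p) :
    glassoObj S (Θ + t • symmSingle i j) lam
      = glassoObj S Θ lam - Real.log (Θ + t • symmSingle i j).det + Real.log Θ.det
        + (∑ k, ∑ l, symmSingle i j k l) * (S i j * t + lam * (|Θ i j + t| - |Θ i j|)) := by
  have hlin : ∑ k, ∑ l, S k l * (Θ + t • symmSingle i j) k l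
      = ∑ k, ∑ l, S k l * Θ k l + t * ∑ k, ∑ l, symmSingle i j k l * S k l := by
    simp only [Matrix.add_apply, Matrix.smul_apply, smul_eq_mul, mul_add, Finset.sum_add_distrib,
      Finset.mul_sum]
    congr 1
    exact Finset.sum_congr rfl fun k _ => Finset.sum_congr rfl fun l _ => by ring
  rw [glassoObj, glassoObj, hlin, hΘ.sum_abs_add_smul_symmSingle,
    sum_sum_symmSingle_mul hS.apply]
  ring

theorem isLocalMin_glassoObj_add_smul_symmSingle {p : ℕ} {S Θ : Matrix (Fin p) (Fin p) ℝ}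
    {lam : ℝ} (hS : S.IsSymm) (hΘ : Θ.PosDef)
    (hmin : ∀ Θ' : Matrix (Fin p) (Fin p) ℝ, Θ'.PosDef → glassoObj S Θ lam ≤ glassoObj S Θ' lam)
    (i j : Fin p) :
    IsLocalMin (fun t => -Real.log (Θ + t • symmSingle i j).det
      + (∑ k, ∑ l, symmSingle i j k l) * S i j * t
      + lam * (∑ k, ∑ l, symmSingle i j k l) * |Θ i j + t|) 0 := by
  filter_upwards [hΘ.eventually_posDef_add_smul (isHermitian_symmSingle i j)] with t ht
  have hle := hmin _ ht
  rw [glassoObj_add_smul_symmSingle hS (isHermitian_iff_isSymm.1 hΘ.1)] at hle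
  simp only [zero_smul, add_zero, mul_zero]
  linarith

theorem stmt_0_general {p : ℕ} (S : Matrix (Fin p) (Fin p) ℝ) (hS : S.IsSymm)
    (lam : ℝ)
    (Θhat : Matrix (Fin p) (Fin p) ℝ) (hΘ : Θhat.PosDef)
    (hmin : ∀ Θ : Matrix (Fin p) (Fin p) ℝ, Θ.PosDef →
      glassoObj S Θhat lam ≤ glassoObj S Θ lam) :
    ∀ i j, (Θhat i j ≠ 0 → Θhat⁻¹ i j - S i j = lam * Real.sign (Θhat i j)) ∧
      (Θhat i j = 0 → |Θhat⁻¹ i j - S i j| ≤ lam) := by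
  intro i j
  set κ := ∑ k, ∑ l, symmSingle i j k l
  have hκ : 0 < κ := sum_sum_symmSingle_pos i j
  have hg : HasDerivAt (fun t => -Real.log (Θhat + t • symmSingle i j).det + κ * S i j * t)
      (κ * (S i j - Θhat⁻¹ i j)) 0 := by
    have hlog := hasDerivAt_log_det_add_smul hΘ.det_pos.ne' (symmSingle i j)
    rw [(isHermitian_iff_isSymm.1 hΘ.inv.1).trace_mul_symmSingle] at hlog
    exact (hlog.neg.fun_add ((hasDerivAt_id' 0).const_mul (κ * S i j))).congr_deriv (by ring)
  have hloc := isLocalMin_glassoObj_add_smul_symmSingle hS hΘ hmin i j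
  constructor
  · intro ha
    have hstat := hloc.add_mul_sign_eq_zero_of_hasDerivAt hg ha
    exact mul_left_cancel₀ hκ.ne' (by linarith)
  · intro ha
    simp only [ha, zero_add] at hloc
    have hsub := hloc.abs_le_of_hasDerivAt_add_mul_abs hg
    rw [abs_mul, abs_of_pos hκ, abs_sub_comm, mul_comm lam] at hsub
    exact le_of_mul_le_mul_left hsub hκ

theorem stmt_0 {p : ℕ} (hp : 1 ≤ p) (S : Matrix (Fin p) (Fin p) ℝ) (hS : S.IsSymm)
    (lam : ℝ) (hlam : 0 < lam)
    (Θhat : Matrix (Fin p) (Fin p) ℝ) (hΘ : Θhat.PosDef)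
    (hmin : ∀ Θ : Matrix (Fin p) (Fin p) ℝ, Θ.PosDef →
      glassoObj S Θhat lam ≤ glassoObj S Θ lam) :
    ∀ i j, (Θhat i j ≠ 0 → Θhat⁻¹ i j - S i j = lam * Real.sign (Θhat i j)) ∧
      (Θhat i j = 0 → |Θhat⁻¹ i j - S i j| ≤ lam) :=
  stmt_0_general S hS lam Θhat hΘ hmin
end

section
/- Let θ, a ∈ ℝ, γ > 0 and λ ≥ 0. Then θ = ST(θ + γa, λγ) if and only if the following holds: (θ ≠ 0 implies a = λ·sign(θ)) and (θ = 0 implies |a| ≤ λ). -/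
/-- The soft-thresholding operator `ST(z, τ) = sign(z) · max(|z| − τ, 0)`. -/
noncomputable def softThresh (z τ : ℝ) : ℝ :=
  Real.sign z * max (|z| - τ) 0

theorem stmt_3 (θ a γ lam : ℝ) (hγ : 0 < γ) (hlam : 0 ≤ lam) :
    θ = softThresh (θ + γ * a) (lam * γ) ↔
      ((θ ≠ 0 → a = lam * Real.sign θ) ∧ (θ = 0 → |a| ≤ lam)) := by
  have hτ : 0 ≤ lam * γ := mul_nonneg hlam hγ.le
  constructor
  · intro h
    constructor
    · intro hθ
      rcases lt_trichotomy θ 0 with ht | ht | ht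
      · rw [Real.sign_of_neg ht]
        rcases lt_trichotomy (θ + γ * a) 0 with hz | hz | hz
        · rw [softThresh, Real.sign_of_neg hz, abs_of_neg hz] at h
          rcases le_or_gt (-(θ + γ * a) - lam * γ) 0 with hm | hm
          · rw [max_eq_right hm] at h
            simp at h
            exact absurd h ht.ne
          · rw [max_eq_left hm.le] at h
            nlinarith
        · rw [softThresh, hz, Real.sign_zero, zero_mul] at h
          exact absurd h ht.ne
        · rw [softThresh, Real.sign_of_pos hz, abs_of_pos hz, one_mul] at h
          have : 0 ≤ max (θ + γ * a - lam * γ) 0 := le_max_right _ _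
          linarith
      · exact absurd ht hθ
      · rw [Real.sign_of_pos ht]
        rcases lt_trichotomy (θ + γ * a) 0 with hz | hz | hz
        · rw [softThresh, Real.sign_of_neg hz, abs_of_neg hz] at h
          have : 0 ≤ max (-(θ + γ * a) - lam * γ) 0 := le_max_right _ _
          nlinarith
        · rw [softThresh, hz, Real.sign_zero, zero_mul] at h
          exact absurd h ht.ne'
        · rw [softThresh, Real.sign_of_pos hz, abs_of_pos hz, one_mul] at h
          rcases le_or_gt (θ + γ * a - lam * γ) 0 with hm | hm
          · rw [max_eq_right hm] at h
            exact absurd h ht.ne'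
          · rw [max_eq_left hm.le] at h
            nlinarith
    · intro ht
      subst ht
      rw [abs_le]
      rcases lt_trichotomy (0 + γ * a) 0 with hz | hz | hz
      · rw [softThresh, Real.sign_of_neg hz, abs_of_neg hz] at h
        rcases le_or_gt (-(0 + γ * a) - lam * γ) 0 with hm | hm
        · constructor <;> nlinarith
        · rw [max_eq_left hm.le] at h; nlinarith
      · have : γ * a = 0 := by linarith
        have ha : a = 0 := by
          rcases mul_eq_zero.mp this with h' | h'
          · exact absurd h' hγ.ne'
          · exact h'
        rw [ha]; constructor <;> linarith
      · rw [softThresh, Real.sign_of_pos hz, abs_of_pos hz, one_mul] at h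
        rcases le_or_gt (0 + γ * a - lam * γ) 0 with hm | hm
        · constructor <;> nlinarith
        · rw [max_eq_left hm.le] at h; nlinarith
  · rintro ⟨h1, h2⟩
    rcases lt_trichotomy θ 0 with ht | ht | ht
    · have ha := h1 ht.ne
      rw [Real.sign_of_neg ht] at ha
      have ha' : a = -lam := by linarith [ha]
      subst ha'
      have hz : θ + γ * (-lam) < 0 := by nlinarith
      rw [softThresh, Real.sign_of_neg hz, abs_of_neg hz]
      have hm : 0 ≤ -(θ + γ * -lam) - lam * γ := by nlinarith
      rw [max_eq_left hm]
      ring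
    · subst ht
      have ha := h2 rfl
      rw [softThresh]
      have habs : |0 + γ * a| - lam * γ ≤ 0 := by
        rw [zero_add, abs_mul, abs_of_pos hγ]
        have : |a| ≤ lam := ha
        nlinarith
      rw [max_eq_right habs, mul_zero]
    · have ha := h1 ht.ne'
      rw [Real.sign_of_pos ht] at ha
      have ha' : a = lam := by linarith [ha]
      have hz : 0 < θ + γ * a := by nlinarith
      rw [softThresh, Real.sign_of_pos hz, abs_of_pos hz, one_mul]
      have hm : 0 ≤ θ + γ * a - lam * γ := by nlinarith
      rw [max_eq_left hm, ha']
      ring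
end

section
/- Let Θ be a symmetric positive definite p×p matrix such that for some γ > 0 and all indices i, j one has Θ_{ij} = ST(Θ_{ij} − γ(S_{ij} − (Θ⁻¹)_{ij}), λγ). Then Θ is a global minimizer of Φ(·, λ) over the set of symmetric positive definite p×p matrices. -/
open Matrix

/-!
The fixed-point equation says that `Θ` is a proximal-gradient fixed point, i.e. that
`0 ∈ S − Θ⁻¹ + λ ∂‖Θ‖₁`: entrywise `|S − Θ⁻¹| ≤ λ`, with `(S − Θ⁻¹)_{ij} Θ_{ij} = −λ |Θ_{ij}|`.
Since `Θ ↦ −log det Θ` is convex with gradient `−Θ⁻¹` (the tangent-line inequality follows from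
`log x ≤ x − 1` applied to the eigenvalues of `Θ^{-1/2} Θ' Θ^{-1/2}`), this first-order condition
makes `Θ` a global minimiser of the convex objective.
-/

open Finset

theorem Matrix.trace_mul_eq_sum_mul_of_isSymm {n R : Type*} [Fintype n] [AddCommMonoid R] [Mul R]
    (A : Matrix n n R) {B : Matrix n n R} (hB : B.IsSymm) :
    (A * B).trace = ∑ i, ∑ j, A i j * B i j := by
  simp only [trace, diag_apply, mul_apply, hB.apply]

theorem Matrix.PosDef.log_det_le_trace_sub_card {n : Type*} [Fintype n] [DecidableEq n]
    {M : Matrix n n ℝ} (hM : M.PosDef) :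
    Real.log M.det ≤ M.trace - Fintype.card n := by
  rw [hM.1.det_eq_prod_eigenvalues, hM.1.trace_eq_sum_eigenvalues]
  simp only [RCLike.ofReal_real_eq_id, id]
  rw [Real.log_prod fun i _ => (hM.eigenvalues_pos i).ne']
  calc ∑ i, Real.log (hM.1.eigenvalues i) ≤ ∑ i, (hM.1.eigenvalues i - 1) :=
        sum_le_sum fun i _ => Real.log_le_sub_one_of_pos (hM.eigenvalues_pos i)
    _ = _ := by simp [sum_sub_distrib]

open scoped MatrixOrder in
theorem Matrix.PosDef.log_det_le_log_det_add_trace {n : Type*} [Fintype n] [DecidableEq n]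
    {A B : Matrix n n ℝ} (hA : A.PosDef) (hB : B.PosDef) :
    Real.log B.det ≤ Real.log A.det + (A⁻¹ * (B - A)).trace := by
  set R := CFC.sqrt A⁻¹
  have hRR : R * R = A⁻¹ := CFC.sqrt_mul_sqrt_self _ hA.inv.posSemidef.nonneg
  have hR : R.IsHermitian := (CFC.sqrt_nonneg A⁻¹).posSemidef.1
  have hdetR : R.det * R.det = A.det⁻¹ := by
    rw [← det_mul, hRR, det_nonsing_inv, Ring.inverse_eq_inv]
  have hRunit : IsUnit R := by
    refine (isUnit_iff_isUnit_det R).2 (isUnit_iff_ne_zero.2 fun h => ?_)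
    rw [h, mul_zero] at hdetR
    exact (inv_pos.2 hA.det_pos).ne' hdetR.symm
  have hM : (R * B * R).PosDef := by
    simpa only [star_eq_conjTranspose, hR.eq] using hRunit.posDef_star_left_conjugate_iff.2 hB
  have hdet : (R * B * R).det = A.det⁻¹ * B.det := by
    rw [det_mul, det_mul, ← hdetR]; ring
  have htr : (R * B * R).trace = (A⁻¹ * B).trace := by
    rw [trace_mul_cycle, hRR]
  have key := hM.log_det_le_trace_sub_card
  rw [hdet, htr, Real.log_mul (inv_pos.2 hA.det_pos).ne' hB.det_pos.ne', Real.log_inv] at key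
  rw [mul_sub, trace_sub, nonsing_inv_mul A hA.det_pos.ne'.isUnit, trace_one]
  linarith

theorem softThresh_cases {z τ : ℝ} (hτ : 0 ≤ τ) :
    (|z| ≤ τ ∧ softThresh z τ = 0) ∨ (τ < z ∧ softThresh z τ = z - τ) ∨
      (z < -τ ∧ softThresh z τ = z + τ) := by
  unfold softThresh
  rcases le_or_gt |z| τ with h | h
  · exact Or.inl ⟨h, by rw [max_eq_right (sub_nonpos.2 h), mul_zero]⟩
  rcases lt_abs.1 h with hz | hz
  · refine Or.inr (Or.inl ⟨hz, ?_⟩)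
    rw [Real.sign_of_pos (by linarith), abs_of_pos (by linarith), max_eq_left (by linarith)]
    ring
  · refine Or.inr (Or.inr ⟨by linarith, ?_⟩)
    rw [Real.sign_of_neg (by linarith), abs_of_neg (by linarith), max_eq_left (by linarith)]
    ring

theorem softThresh_subgradient {z τ : ℝ} (hτ : 0 ≤ τ) :
    |z - softThresh z τ| ≤ τ ∧ (z - softThresh z τ) * softThresh z τ = τ * |softThresh z τ| := by
  rcases softThresh_cases (z := z) hτ with ⟨hz, h⟩ | ⟨hz, h⟩ | ⟨hz, h⟩ <;> rw [h]
  · simpa using hz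
  · rw [abs_of_pos (by linarith : 0 < z - τ), sub_sub_cancel, abs_of_nonneg hτ]
    exact ⟨le_rfl, rfl⟩
  · rw [abs_of_neg (by linarith : z + τ < 0), sub_add_cancel_left, abs_neg, abs_of_nonneg hτ]
    exact ⟨le_rfl, by ring⟩

theorem subgradient_of_eq_softThresh {t c lam γ : ℝ} (hlam : 0 ≤ lam) (hγ : 0 < γ)
    (h : t = softThresh (t - γ * c) (lam * γ)) :
    |c| ≤ lam ∧ c * t = -(lam * |t|) := by
  obtain ⟨hbound, hcompl⟩ := softThresh_subgradient (z := t - γ * c) (mul_nonneg hlam hγ.le)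
  rw [← h, sub_sub_cancel_left] at hbound hcompl
  rw [abs_neg, abs_mul, abs_of_pos hγ] at hbound
  constructor
  · nlinarith
  · exact mul_left_cancel₀ hγ.ne' (by linarith)

theorem glassoObj_le_of_subgradient {p : ℕ} {S Θ Θ' : Matrix (Fin p) (Fin p) ℝ} {lam : ℝ}
    (hΘ : Θ.PosDef) (hΘ' : Θ'.PosDef) (hbound : ∀ i j, |S i j - Θ⁻¹ i j| ≤ lam)
    (hcompl : ∀ i j, (S i j - Θ⁻¹ i j) * Θ i j = -(lam * |Θ i j|)) :
    glassoObj S Θ lam ≤ glassoObj S Θ' lam := by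
  have hlog := hΘ.log_det_le_log_det_add_trace hΘ'
  rw [trace_mul_eq_sum_mul_of_isSymm _
    (isHermitian_iff_isSymm.1 (hΘ'.1.sub hΘ.1))] at hlog
  have hzero : ∑ i, ∑ j, ((S i j - Θ⁻¹ i j) * Θ i j + lam * |Θ i j|) = 0 :=
    sum_eq_zero fun i _ => sum_eq_zero fun j _ => by rw [hcompl]; ring
  have hnonneg : 0 ≤ ∑ i, ∑ j, ((S i j - Θ⁻¹ i j) * Θ' i j + lam * |Θ' i j|) :=
    sum_nonneg fun i _ => sum_nonneg fun j _ => by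
      have := (abs_mul _ _).trans_le (mul_le_mul_of_nonneg_right (hbound i j) (abs_nonneg (Θ' i j)))
      linarith [neg_abs_le ((S i j - Θ⁻¹ i j) * Θ' i j)]
  simp only [glassoObj, Matrix.sub_apply, mul_sub, sub_mul, mul_sum, sum_add_distrib, sum_sub_distrib]
    at hlog hzero hnonneg ⊢
  linarith

theorem stmt_6_general {p : ℕ} (S : Matrix (Fin p) (Fin p) ℝ)
    (lam : ℝ) (hlam : 0 < lam)
    (Θ : Matrix (Fin p) (Fin p) ℝ) (hΘ : Θ.PosDef)
    (γ : ℝ) (hγ : 0 < γ)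
    (hfix : ∀ i j, Θ i j = softThresh (Θ i j - γ * (S i j - Θ⁻¹ i j)) (lam * γ)) :
    ∀ Θ' : Matrix (Fin p) (Fin p) ℝ, Θ'.PosDef →
      glassoObj S Θ lam ≤ glassoObj S Θ' lam := by
  have hsub i j := subgradient_of_eq_softThresh hlam.le hγ (hfix i j)
  exact fun Θ' hΘ' =>
    glassoObj_le_of_subgradient hΘ hΘ' (fun i j => (hsub i j).1) (fun i j => (hsub i j).2)

theorem stmt_6 {p : ℕ} (hp : 1 ≤ p) (S : Matrix (Fin p) (Fin p) ℝ) (hS : S.IsSymm)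
    (lam : ℝ) (hlam : 0 < lam)
    (Θ : Matrix (Fin p) (Fin p) ℝ) (hΘ : Θ.PosDef)
    (γ : ℝ) (hγ : 0 < γ)
    (hfix : ∀ i j, Θ i j = softThresh (Θ i j - γ * (S i j - Θ⁻¹ i j)) (lam * γ)) :
    ∀ Θ' : Matrix (Fin p) (Fin p) ℝ, Θ'.PosDef →
      glassoObj S Θ lam ≤ glassoObj S Θ' lam :=
  stmt_6_general S lam hlam Θ hΘ γ hγ hfix
end

section
/- Let Λ ∈ ℝ^{p×p} have nonnegative entries and let Θ̂ be a symmetric positive definite p×p matrix satisfying the non-degenerate first-order conditions: for all i, j, if Θ̂_{ij} ≠ 0 then (Θ̂⁻¹)_{ij} − S_{ij} = Λ_{ij}·sign(Θ̂_{ij}), and if Θ̂_{ij} = 0 then |(Θ̂⁻¹)_{ij} − S_{ij}| < Λ_{ij}. Fix γ > 0 and set Ẑ = Θ̂ − γ(S − Θ̂⁻¹). Then for all i, j: |Ẑ_{ij}| > γΛ_{ij} if Θ̂_{ij} ≠ 0, |Ẑ_{ij}| < γΛ_{ij} if Θ̂_{ij} = 0, and in particular |Ẑ_{ij}| ≠ γΛ_{ij}.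 -/
open Matrix

theorem stmt_8 {p : ℕ} (hp : 1 ≤ p) (S : Matrix (Fin p) (Fin p) ℝ) (hS : S.IsSymm)
    (Lam : Matrix (Fin p) (Fin p) ℝ) (hLam : ∀ i j, 0 ≤ Lam i j)
    (Θhat : Matrix (Fin p) (Fin p) ℝ) (hΘ : Θhat.PosDef)
    (h1 : ∀ i j, Θhat i j ≠ 0 → Θhat⁻¹ i j - S i j = Lam i j * Real.sign (Θhat i j))
    (h2 : ∀ i j, Θhat i j = 0 → |Θhat⁻¹ i j - S i j| < Lam i j)
    (γ : ℝ) (hγ : 0 < γ)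
    (Z : Matrix (Fin p) (Fin p) ℝ) (hZ : Z = Θhat - γ • (S - Θhat⁻¹)) :
    ∀ i j, (Θhat i j ≠ 0 → γ * Lam i j < |Z i j|) ∧ (Θhat i j = 0 → |Z i j| < γ * Lam i j) ∧
      |Z i j| ≠ γ * Lam i j := by
  intro i j
  have hZij : Z i j = Θhat i j + γ * (Θhat⁻¹ i j - S i j) := by
    simp [hZ, Matrix.sub_apply, Matrix.smul_apply]; ring
  have key1 : Θhat i j ≠ 0 → γ * Lam i j < |Z i j| := by
    intro hne
    have h := h1 i j hne
    rcases lt_trichotomy (Θhat i j) 0 with hlt | heq | hgt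
    · have hs : Real.sign (Θhat i j) = -1 := Real.sign_of_neg hlt
      have : Z i j = Θhat i j - γ * Lam i j := by rw [hZij, h, hs]; ring
      have hle : Z i j < -(γ * Lam i j) := by
        rw [this]; nlinarith [hLam i j]
      calc γ * Lam i j < -(Z i j) := by linarith
        _ ≤ |Z i j| := neg_le_abs _
    · exact absurd heq hne
    · have hs : Real.sign (Θhat i j) = 1 := Real.sign_of_pos hgt
      have : Z i j = Θhat i j + γ * Lam i j := by rw [hZij, h, hs]; ring
      calc γ * Lam i j < Z i j := by rw [this]; nlinarith [hLam i j]
        _ ≤ |Z i j| := le_abs_self _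
  have key2 : Θhat i j = 0 → |Z i j| < γ * Lam i j := by
    intro h0
    have := h2 i j h0
    rw [hZij, h0, zero_add, abs_mul, abs_of_pos hγ]
    exact (mul_lt_mul_iff_right₀ hγ).2 this
  refine ⟨key1, key2, ?_⟩
  by_cases h0 : Θhat i j = 0
  · exact (key2 h0).ne
  · exact (key1 h0).ne'
end

section
/- Fix γ > 0 and λ₀ > 0. Let Θ : ℝ → ℝ^{p×p} be a matrix-valued function, differentiable at λ₀ with derivative J ∈ ℝ^{p×p} (entrywise: each λ ↦ Θ(λ)_{ij} is differentiable at λ₀ with derivative J_{ij}), such that Θ(λ) is invertible for all λ in a neighborhood of λ₀, and such that for all λ in a neighborhood of λ₀ and all i, j, the fixed-point equation Θ(λ)_{ij} = ST(Θ(λ)_{ij} − γ(S_{ij} − (Θ(λ)⁻¹)_{ij}), λγ) holds. Set Ẑ = Θ(λ₀) − γ(S − Θ(λ₀)⁻¹) and assume |Ẑ_{ij}| ≠ λ₀γ for all i, j. Define M ∈ ℝ^{p×p} by M_{ij} = 1 if |Ẑ_{ij}| > λ₀γ and M_{ij} = 0 otherwise, and E ∈ ℝ^{p×p} by E_{ij}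 = −γ·sign(Ẑ_{ij}) if |Ẑ_{ij}| > λ₀γ and E_{ij} = 0 otherwise. Then J = M ⊙ (J − γ·Θ(λ₀)⁻¹ J Θ(λ₀)⁻¹) + E, where ⊙ denotes the entrywise (Hadamard) product. -/
/-!
Since `|Ẑ_ij| ≠ λ₀γ`, the strict inequality between `|Ẑ_ij|` and `λ₀γ` persists for `λ` near `λ₀`,
so there the soft-thresholding in the fixed-point equation is either identically `0` or the affine
map `z ↦ z − λγ · sign Ẑ_ij`. In the first case `Θ(λ)_ij` vanishes near `λ₀`, so `J_ij = 0`. In the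
second the equation collapses to `(Θ(λ)⁻¹)_ij = S_ij + λ · sign Ẑ_ij`; differentiating at `λ₀`
with `(Θ⁻¹)' = −Θ⁻¹ J Θ⁻¹` gives `(Θ(λ₀)⁻¹ J Θ(λ₀)⁻¹)_ij = −sign Ẑ_ij`, which is the claimed
identity at `(i, j)`.
-/

open Matrix
open scoped Matrix

open Filter Topology

section MatrixInverse

-- Any norm would do; the `L∞` operator norm makes matrices a normed algebra, so that the
-- derivative of `Ring.inverse` is available.
open scoped Matrix.Norms.Operator

variable {𝕜 n : Type*} [NontriviallyNormedField 𝕜] [Fintype n]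

theorem Matrix.hasDerivAt_of_entries [DecidableEq n] {A : 𝕜 → Matrix n n 𝕜}
    {A' : Matrix n n 𝕜} {x : 𝕜} (hA : ∀ i j, HasDerivAt (fun t => A t i j) (A' i j) x) :
    HasDerivAt A A' x := by
  have hsum : ∀ B : Matrix n n 𝕜, B = ∑ i, ∑ j, B i j • single i j (1 : 𝕜) := fun B => by
    simp_rw [smul_single, smul_eq_mul, mul_one]
    exact matrix_eq_sum_single B
  rw [funext fun t => hsum (A t), hsum A']
  exact HasDerivAt.fun_sum fun i _ => HasDerivAt.fun_sum fun j _ => (hA i j).smul_const _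

theorem HasDerivAt.matrix_entry [CompleteSpace 𝕜] [DecidableEq n] {A : 𝕜 → Matrix n n 𝕜}
    {A' : Matrix n n 𝕜} {x : 𝕜} (hA : HasDerivAt A A' x) (i j : n) :
    HasDerivAt (fun t => A t i j) (A' i j) x :=
  ((entryLinearMap 𝕜 𝕜 i j).toContinuousLinearMap.hasFDerivAt).comp_hasDerivAt x hA

theorem Matrix.hasDerivAt_inv_entry [CompleteSpace 𝕜] [DecidableEq n] {A : 𝕜 → Matrix n n 𝕜}
    {A' : Matrix n n 𝕜} {x : 𝕜} (hA : ∀ i j, HasDerivAt (fun t => A t i j) (A' i j) x)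
    (hx : IsUnit (A x).det) (i j : n) :
    HasDerivAt (fun t => (A t)⁻¹ i j) (-((A x)⁻¹ * A' * (A x)⁻¹) i j) x := by
  have : HasSummableGeomSeries (Matrix n n 𝕜) :=
    @instHasSummableGeomSeriesOfCompleteSpace _ _ (FiniteDimensional.complete 𝕜 _)
  obtain ⟨u, hu⟩ := (isUnit_iff_isUnit_det _).mpr hx
  have hinv : HasFDerivAt Ring.inverse
      (-ContinuousLinearMap.mulLeftRight 𝕜 _ (A x)⁻¹ (A x)⁻¹) (A x) := by
    simpa only [coe_units_inv, hu] using hasFDerivAt_ringInverse (𝕜 := 𝕜) u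
  have hcomp := (hinv.comp_hasDerivAt x (hasDerivAt_of_entries hA)).matrix_entry i j
  simp_rw [Function.comp_def, ← nonsing_inv_eq_ringInverse] at hcomp
  exact hcomp

end MatrixInverse

section SoftThreshold

theorem Real.sign_mul_abs (z : ℝ) : Real.sign z * |z| = z := by
  rcases lt_trichotomy z 0 with h | rfl | h
  · rw [Real.sign_of_neg h, abs_of_neg h, neg_one_mul, neg_neg]
  · rw [abs_zero, mul_zero]
  · rw [Real.sign_of_pos h, abs_of_pos h, one_mul]

theorem softThresh_of_abs_le {z τ : ℝ} (h : |z| ≤ τ) : softThresh z τ = 0 := by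
  rw [softThresh, max_eq_right (sub_nonpos.mpr h), mul_zero]

theorem softThresh_of_lt_abs {z τ : ℝ} (h : τ < |z|) :
    softThresh z τ = z - τ * Real.sign z := by
  rw [softThresh, max_eq_left (sub_nonneg.mpr h.le), mul_sub, Real.sign_mul_abs, mul_comm]

variable {α : Type*} [TopologicalSpace α] {a : α}

theorem ContinuousAt.eventually_real_sign_eq {f : α → ℝ} (hf : ContinuousAt f a)
    (ha : f a ≠ 0) : ∀ᶠ x in 𝓝 a, Real.sign (f x) = Real.sign (f a) := by
  rcases ha.lt_or_gt with h | h
  · filter_upwards [hf.eventually (gt_mem_nhds h)] with x hx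
    rw [Real.sign_of_neg hx, Real.sign_of_neg h]
  · filter_upwards [hf.eventually (lt_mem_nhds h)] with x hx
    rw [Real.sign_of_pos hx, Real.sign_of_pos h]

theorem eventually_softThresh_eq_zero {ζ τ : α → ℝ} (hζ : ContinuousAt ζ a)
    (hτ : ContinuousAt τ a) (h : |ζ a| < τ a) :
    ∀ᶠ x in 𝓝 a, softThresh (ζ x) (τ x) = 0 :=
  (hζ.abs.eventually_lt hτ h).mono fun _ hx => softThresh_of_abs_le hx.le

theorem eventually_softThresh_eq_sub {ζ τ : α → ℝ} (hζ : ContinuousAt ζ a)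
    (hτ : ContinuousAt τ a) (hτ₀ : 0 ≤ τ a) (h : τ a < |ζ a|) :
    ∀ᶠ x in 𝓝 a, softThresh (ζ x) (τ x) = ζ x - τ x * Real.sign (ζ a) := by
  filter_upwards [hτ.eventually_lt hζ.abs h,
    hζ.eventually_real_sign_eq (abs_pos.mp (hτ₀.trans_lt h))] with x hx hs
  rw [softThresh_of_lt_abs hx, hs]

end SoftThreshold

theorem stmt_11_general {p : ℕ} (S : Matrix (Fin p) (Fin p) ℝ)
    (γ lam₀ : ℝ) (hγ : 0 < γ) (hlam₀ : 0 < lam₀)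
    (Θ : ℝ → Matrix (Fin p) (Fin p) ℝ) (J : Matrix (Fin p) (Fin p) ℝ)
    (hdiff : ∀ i j, HasDerivAt (fun lam => Θ lam i j) (J i j) lam₀)
    (hinv : ∀ᶠ lam in nhds lam₀, IsUnit (Θ lam).det)
    (hfix : ∀ᶠ lam in nhds lam₀, ∀ i j,
      Θ lam i j = softThresh (Θ lam i j - γ * (S i j - (Θ lam)⁻¹ i j)) (lam * γ))
    (Z : Matrix (Fin p) (Fin p) ℝ) (hZ : Z = Θ lam₀ - γ • (S - (Θ lam₀)⁻¹))
    (hnd : ∀ i j, |Z i j| ≠ lam₀ * γ)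
    (M E : Matrix (Fin p) (Fin p) ℝ)
    (hM : ∀ i j, M i j = if lam₀ * γ < |Z i j| then 1 else 0)
    (hE : ∀ i j, E i j = if lam₀ * γ < |Z i j| then -γ * Real.sign (Z i j) else 0) :
    J = M ⊙ (J - γ • ((Θ lam₀)⁻¹ * J * (Θ lam₀)⁻¹)) + E := by
  have hinvDeriv := hasDerivAt_inv_entry hdiff hinv.self_of_nhds
  ext i j
  set ζ : ℝ → ℝ := fun t => Θ t i j - γ * (S i j - (Θ t)⁻¹ i j)
  have hζ : ContinuousAt ζ lam₀ := (hdiff i j).continuousAt.sub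
    ((continuousAt_const.sub (hinvDeriv i j).continuousAt).const_mul γ)
  have hζZ : ζ lam₀ = Z i j := by simp [ζ, hZ]
  have hτ : ContinuousAt (fun t => t * γ) lam₀ := by fun_prop
  rcases (hnd i j).lt_or_gt with hlt | hgt
  · have hΘ : (fun t => Θ t i j) =ᶠ[𝓝 lam₀] fun _ => 0 := by
      filter_upwards [hfix, eventually_softThresh_eq_zero hζ hτ (hζZ ▸ hlt)] with t ht h0
      exact (ht i j).trans h0
    have hJ : J i j = 0 := (hdiff i j).unique ((hasDerivAt_const _ _).congr_of_eventuallyEq hΘ)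
    simp [hM, hE, hJ, not_lt.mpr hlt.le]
  · have hΘinv : (fun t => (Θ t)⁻¹ i j) =ᶠ[𝓝 lam₀] fun t => S i j + t * Real.sign (Z i j) := by
      filter_upwards [hfix, eventually_softThresh_eq_sub hζ hτ (by positivity) (hζZ ▸ hgt)]
        with t ht h1
      have hfixt := (ht i j).trans h1
      rw [hζZ] at hfixt
      exact mul_left_cancel₀ hγ.ne' (by linear_combination -hfixt)
    have hAJA : -((Θ lam₀)⁻¹ * J * (Θ lam₀)⁻¹) i j = Real.sign (Z i j) :=
      (hinvDeriv i j).unique (((hasDerivAt_mul_const _).const_add _).congr_of_eventuallyEq hΘinv)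
    simp only [hM, hE, hgt, if_true, Matrix.add_apply, hadamard_apply, Matrix.sub_apply,
      Matrix.smul_apply, smul_eq_mul, one_mul]
    linear_combination -γ * hAJA

theorem stmt_11 {p : ℕ} (hp : 1 ≤ p) (S : Matrix (Fin p) (Fin p) ℝ) (hS : S.IsSymm)
    (γ lam₀ : ℝ) (hγ : 0 < γ) (hlam₀ : 0 < lam₀)
    (Θ : ℝ → Matrix (Fin p) (Fin p) ℝ) (J : Matrix (Fin p) (Fin p) ℝ)
    (hdiff : ∀ i j, HasDerivAt (fun lam => Θ lam i j) (J i j) lam₀)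
    (hinv : ∀ᶠ lam in nhds lam₀, IsUnit (Θ lam).det)
    (hfix : ∀ᶠ lam in nhds lam₀, ∀ i j,
      Θ lam i j = softThresh (Θ lam i j - γ * (S i j - (Θ lam)⁻¹ i j)) (lam * γ))
    (Z : Matrix (Fin p) (Fin p) ℝ) (hZ : Z = Θ lam₀ - γ • (S - (Θ lam₀)⁻¹))
    (hnd : ∀ i j, |Z i j| ≠ lam₀ * γ)
    (M E : Matrix (Fin p) (Fin p) ℝ)
    (hM : ∀ i j, M i j = if lam₀ * γ < |Z i j| then 1 else 0)
    (hE : ∀ i j, E i j = if lam₀ * γ < |Z i j| then -γ * Real.sign (Z i j) else 0) :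
    J = M ⊙ (J - γ • ((Θ lam₀)⁻¹ * J * (Θ lam₀)⁻¹)) + E :=
  stmt_11_general S γ lam₀ hγ hlam₀ Θ J hdiff hinv hfix Z hZ hnd M E hM hE
end

section
/- Fix γ > 0, a matrix Λ ∈ ℝ^{p×p} with positive entries, and a pair of indices (k,l). Let Θ : ℝ → ℝ^{p×p} be a function of the single hyperparameter μ = Λ_{kl} (all other entries of Λ held fixed), differentiable at μ₀ = Λ_{kl} with derivative J ∈ ℝ^{p×p}, such that Θ(μ) is invertible for all μ in a neighborhood of μ₀, and such that for all μ in a neighborhood of μ₀ and all i, j, the fixed-point equation Θ(μ)_{ij} = ST(Θ(μ)_{ij} − γ(S_{ij} − (Θ(μ)⁻¹)_{ij}), γΛ(μ)_{ij}) holds, where Λ(μ) agrees with Λ except Λ(μ)_{kl} = μ. Set Ẑ = Θ(μ₀) − γ(S − Θ(μ₀)⁻¹) and assume |Ẑ_{ij}| ≠ γΛ_{ij} for all i, j. Define M ∈ ℝ^{p×p} by M_{ij} = 1 if |Ẑ_{ij}| > γΛ_{ij} and 0 otherwise, and E ∈ ℝ^{p×p} by E_{ij} = −γ·sign(Ẑ_{kl})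 if (i,j) = (k,l) and |Ẑ_{kl}| > γΛ_{kl}, and E_{ij} = 0 otherwise. Then J = M ⊙ (J − γ·Θ(μ₀)⁻¹ J Θ(μ₀)⁻¹) + E. -/
open Matrix
open scoped Matrix

/-!
Away from the kink `|z| = τ`, soft-thresholding is locally affine in `(z, τ)`: it vanishes
identically where `|z| < τ`, and equals `z - sign(z) τ` with a locally constant sign where
`|z| > τ`. Differentiating the fixed-point equation entrywise, with
`d(Θ⁻¹) = -Θ⁻¹ J Θ⁻¹` and a threshold that moves only in entry `(k, l)`, gives the formula.
-/

open Filter Topology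

theorem Real.sign_eventuallyEq {f : ℝ → ℝ} {x : ℝ} (hf : ContinuousAt f x) (hx : f x ≠ 0) :
    (fun y => Real.sign (f y)) =ᶠ[𝓝 x] fun _ => Real.sign (f x) := by
  rcases hx.lt_or_gt with hneg | hpos
  · filter_upwards [hf.eventually (gt_mem_nhds hneg)] with y hy
    rw [Real.sign_of_neg hy, Real.sign_of_neg hneg]
  · filter_upwards [hf.eventually (lt_mem_nhds hpos)] with y hy
    rw [Real.sign_of_pos hy, Real.sign_of_pos hpos]

theorem hasDerivAt_ite_id_const (c : Prop) [Decidable c] (a x : ℝ) :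
    HasDerivAt (fun y => if c then y else a) (if c then 1 else 0) x := by
  split_ifs
  · exact hasDerivAt_id x
  · exact hasDerivAt_const x a

theorem softThresh_of_le_abs {z τ : ℝ} (h : τ ≤ |z|) :
    softThresh z τ = z - Real.sign z * τ := by
  rw [softThresh, max_eq_left (sub_nonneg.2 h), mul_sub, Real.sign_mul_abs]

theorem HasDerivAt.softThresh {z τ : ℝ → ℝ} {z' τ' x : ℝ} (hz : HasDerivAt z z' x)
    (hτ : HasDerivAt τ τ' x) (hτ₀ : 0 ≤ τ x) (hne : |z x| ≠ τ x) :
    HasDerivAt (fun y => softThresh (z y) (τ y))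
      (if τ x < |z x| then z' - Real.sign (z x) * τ' else 0) x := by
  rcases hne.lt_or_gt with hlt | hgt
  · rw [if_neg hlt.not_gt]
    refine (hasDerivAt_const x 0).congr_of_eventuallyEq ?_
    filter_upwards [hz.continuousAt.abs.eventually_lt hτ.continuousAt hlt] with y hy
    exact softThresh_of_abs_le hy.le
  · rw [if_pos hgt]
    have hz₀ : z x ≠ 0 := abs_pos.1 (hτ₀.trans_lt hgt)
    refine (hz.sub (hτ.const_mul (Real.sign (z x)))).congr_of_eventuallyEq ?_
    filter_upwards [hτ.continuousAt.eventually_lt hz.continuousAt.abs hgt,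
      Real.sign_eventuallyEq hz.continuousAt hz₀] with y hy hsign
    rw [softThresh_of_le_abs hy.le, hsign, Pi.sub_apply]

namespace Matrix

variable {𝕜 : Type*} [RCLike 𝕜] {n : Type*} [Fintype n]

theorem hasDerivAt_iff_forall_apply {m : Type*} [Fintype m] {A : 𝕜 → Matrix m n 𝕜}
    {A' : Matrix m n 𝕜} {x : 𝕜} :
    HasDerivAt A A' x ↔ ∀ i j, HasDerivAt (fun t => A t i j) (A' i j) x :=
  hasDerivAt_pi.trans <| forall_congr' fun _ => hasDerivAt_pi

section

attribute [local instance] Matrix.linftyOpNormedRing Matrix.linftyOpNormedAlgebra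

theorem hasDerivAt_inv [DecidableEq n] {A : 𝕜 → Matrix n n 𝕜} {A' : Matrix n n 𝕜} {x : 𝕜}
    (hA : HasDerivAt A A' x) (hx : IsUnit (A x).det) :
    HasDerivAt (fun t => (A t)⁻¹) (-((A x)⁻¹ * A' * (A x)⁻¹)) x := by
  obtain ⟨u, hu⟩ := (isUnit_iff_isUnit_det _).2 hx
  have := (hu ▸ hasFDerivAt_ringInverse (𝕜 := 𝕜) u).comp_hasDerivAt x hA
  rw [← hu]
  simp only [Function.comp_def, ← nonsing_inv_eq_ringInverse, _root_.neg_apply,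
    ContinuousLinearMap.mulLeftRight_apply, coe_units_inv] at this
  exact this

end

end Matrix

section

open scoped Matrix.Norms.Elementwise

theorem hasDerivAt_sub_smul_sub_inv {n : Type*} [Fintype n] [DecidableEq n]
    (S : Matrix n n ℝ) (γ : ℝ) {Θ : ℝ → Matrix n n ℝ} {J : Matrix n n ℝ} {x : ℝ}
    (hΘ : HasDerivAt Θ J x) (hx : IsUnit (Θ x).det) :
    HasDerivAt (fun μ => Θ μ - γ • (S - (Θ μ)⁻¹)) (J - γ • ((Θ x)⁻¹ * J * (Θ x)⁻¹)) x :=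
  (hΘ.sub (((hasDerivAt_const x S).sub (hasDerivAt_inv hΘ hx)).const_smul γ)).congr_deriv
    (by rw [zero_sub, neg_neg])

end

theorem stmt_14_general {p : ℕ} (S : Matrix (Fin p) (Fin p) ℝ)
    (γ : ℝ) (hγ : 0 < γ)
    (Lam : Matrix (Fin p) (Fin p) ℝ) (hLam : ∀ i j, 0 < Lam i j)
    (k l : Fin p)
    (Θ : ℝ → Matrix (Fin p) (Fin p) ℝ) (J : Matrix (Fin p) (Fin p) ℝ)
    (hdiff : ∀ i j, HasDerivAt (fun μ => Θ μ i j) (J i j) (Lam k l))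
    (hinv : ∀ᶠ μ in nhds (Lam k l), IsUnit (Θ μ).det)
    (hfix : ∀ᶠ μ in nhds (Lam k l), ∀ i j,
      Θ μ i j = softThresh (Θ μ i j - γ * (S i j - (Θ μ)⁻¹ i j))
        (γ * if (i, j) = (k, l) then μ else Lam i j))
    (Z : Matrix (Fin p) (Fin p) ℝ) (hZ : Z = Θ (Lam k l) - γ • (S - (Θ (Lam k l))⁻¹))
    (hnd : ∀ i j, |Z i j| ≠ γ * Lam i j)
    (M E : Matrix (Fin p) (Fin p) ℝ)
    (hM : ∀ i j, M i j = if γ * Lam i j < |Z i j| then 1 else 0)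
    (hE : ∀ i j, E i j =
      if (i, j) = (k, l) ∧ γ * Lam k l < |Z k l| then -γ * Real.sign (Z k l) else 0) :
    J = M ⊙ (J - γ • ((Θ (Lam k l))⁻¹ * J * (Θ (Lam k l))⁻¹)) + E := by
  have hZ' := hasDerivAt_sub_smul_sub_inv S γ (hasDerivAt_iff_forall_apply.2 hdiff)
    hinv.self_of_nhds
  ext i j
  have hτ₀ : (γ * if (i, j) = (k, l) then Lam k l else Lam i j) = γ * Lam i j := by
    split_ifs with h
    · obtain ⟨rfl, rfl⟩ := Prod.mk.inj h; rfl
    · rfl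
  have hST := (hasDerivAt_iff_forall_apply.1 hZ' i j).softThresh
    ((hasDerivAt_ite_id_const _ (Lam i j) (Lam k l)).const_mul γ)
    (by rw [hτ₀]; exact (mul_pos hγ (hLam i j)).le) (by rw [hτ₀, ← hZ]; exact hnd i j)
  have hJ := (hdiff i j).unique (hST.congr_of_eventuallyEq (hfix.mono fun μ h => h i j))
  rw [hJ, hτ₀, ← hZ, Matrix.add_apply, hadamard_apply, hM, hE]
  by_cases hij : (i, j) = (k, l)
  · obtain ⟨rfl, rfl⟩ := Prod.mk.inj hij
    simp only [if_true, true_and]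
    split_ifs <;> ring
  · simp only [hij, false_and, if_false]
    split_ifs <;> ring

theorem stmt_14 {p : ℕ} (hp : 1 ≤ p) (S : Matrix (Fin p) (Fin p) ℝ) (hS : S.IsSymm)
    (γ : ℝ) (hγ : 0 < γ)
    (Lam : Matrix (Fin p) (Fin p) ℝ) (hLam : ∀ i j, 0 < Lam i j)
    (k l : Fin p)
    (Θ : ℝ → Matrix (Fin p) (Fin p) ℝ) (J : Matrix (Fin p) (Fin p) ℝ)
    (hdiff : ∀ i j, HasDerivAt (fun μ => Θ μ i j) (J i j) (Lam k l))
    (hinv : ∀ᶠ μ in nhds (Lam k l), IsUnit (Θ μ).det)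
    (hfix : ∀ᶠ μ in nhds (Lam k l), ∀ i j,
      Θ μ i j = softThresh (Θ μ i j - γ * (S i j - (Θ μ)⁻¹ i j))
        (γ * if (i, j) = (k, l) then μ else Lam i j))
    (Z : Matrix (Fin p) (Fin p) ℝ) (hZ : Z = Θ (Lam k l) - γ • (S - (Θ (Lam k l))⁻¹))
    (hnd : ∀ i j, |Z i j| ≠ γ * Lam i j)
    (M E : Matrix (Fin p) (Fin p) ℝ)
    (hM : ∀ i j, M i j = if γ * Lam i j < |Z i j| then 1 else 0)
    (hE : ∀ i j, E i j =
      if (i, j) = (k, l) ∧ γ * Lam k l < |Z k l| then -γ * Real.sign (Z k l) else 0) :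
    J = M ⊙ (J - γ • ((Θ (Lam k l))⁻¹ * J * (Θ (Lam k l))⁻¹)) + E :=
  stmt_14_general S γ hγ Lam hLam k l Θ J hdiff hinv hfix Z hZ hnd M E hM hE
end

section
/- Let Θ be a symmetric positive definite p×p matrix, let Λ ∈ ℝ^{p×p} have positive entries, fix γ > 0 and Ẑ ∈ ℝ^{p×p} with |Ẑ_{ij}| ≠ γΛ_{ij} for all i, j, let 𝒮 = {(i,j) : |Ẑ_{ij}| > γΛ_{ij}}, and let M_{ij} = 1 if (i,j) ∈ 𝒮 and 0 otherwise. Fix (k,l) and let E ∈ ℝ^{p×p} be the matrix with E_{kl} = −γ·sign(Ẑ_{kl}) if (k,l) ∈ 𝒮 and all other entries zero. Let K = Θ⁻¹ ⊗ Θ⁻¹ and assume K_{𝒮,𝒮} is invertible. If J ∈ ℝ^{p×p} satisfies J = M ⊙ (J − γ·Θ⁻¹ J Θ⁻¹) + E, then vec(J)_{𝒮} = (1/γ)·(K_{𝒮,𝒮})⁻¹ · vec(E)_{𝒮} and vec(J)_{(i,j)} = 0 for all (i,j) ∉ 𝒮. -/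
open Matrix
open scoped Matrix Kronecker

theorem stmt_15 {p : ℕ} (hp : 1 ≤ p)
    (Θ : Matrix (Fin p) (Fin p) ℝ) (hΘ : Θ.PosDef)
    (Lam : Matrix (Fin p) (Fin p) ℝ) (hLam : ∀ i j, 0 < Lam i j)
    (γ : ℝ) (hγ : 0 < γ)
    (Z : Matrix (Fin p) (Fin p) ℝ) (hnd : ∀ i j, |Z i j| ≠ γ * Lam i j)
    (𝒮 : Finset (Fin p × Fin p))
    (h𝒮 : ∀ x : Fin p × Fin p, x ∈ 𝒮 ↔ γ * Lam x.1 x.2 < |Z x.1 x.2|)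
    (M : Matrix (Fin p) (Fin p) ℝ) (hM : ∀ i j, M i j = if (i, j) ∈ 𝒮 then 1 else 0)
    (k l : Fin p)
    (E : Matrix (Fin p) (Fin p) ℝ)
    (hE : ∀ i j, E i j =
      if (i, j) = (k, l) ∧ (k, l) ∈ 𝒮 then -γ * Real.sign (Z k l) else 0)
    (K𝒮 : Matrix 𝒮 𝒮 ℝ)
    (hK𝒮 : K𝒮 = (Θ⁻¹ ⊗ₖ Θ⁻¹).submatrix (fun x : 𝒮 => (x : Fin p × Fin p))
      (fun x : 𝒮 => (x : Fin p × Fin p)))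
    (hKinv : IsUnit K𝒮)
    (J : Matrix (Fin p) (Fin p) ℝ)
    (heq : J = M ⊙ (J - γ • (Θ⁻¹ * J * Θ⁻¹)) + E) :
    (fun x : 𝒮 => J (x : Fin p × Fin p).1 (x : Fin p × Fin p).2) =
      (1 / γ) • (K𝒮⁻¹ *ᵥ fun x : 𝒮 => E (x : Fin p × Fin p).1 (x : Fin p × Fin p).2) ∧
    ∀ x : Fin p × Fin p, x ∉ 𝒮 → J x.1 x.2 = 0 := by
  -- symmetry of Θ⁻¹
  have hsym : ∀ a b, Θ⁻¹ a b = Θ⁻¹ b a := by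
    intro a b
    have h := hΘ.isHermitian.inv
    have := congrFun (congrFun h a) b
    simpa [Matrix.conjTranspose_apply] using this.symm
  -- pointwise equation
  have hpt : ∀ i j, J i j = M i j * (J i j - γ * (Θ⁻¹ * J * Θ⁻¹) i j) + E i j := by
    intro i j
    conv_lhs => rw [heq]
    simp [Matrix.hadamard_apply, Matrix.sub_apply, Matrix.smul_apply]
  -- J vanishes off 𝒮
  have hzero : ∀ x : Fin p × Fin p, x ∉ 𝒮 → J x.1 x.2 = 0 := by
    intro x hx
    have h1 := hpt x.1 x.2
    rw [hM, hE] at h1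
    have hne : ¬((x.1, x.2) = (k, l) ∧ (k, l) ∈ 𝒮) := by
      rintro ⟨h2, h3⟩
      exact hx (by rw [show x = (k, l) from Prod.ext (congrArg Prod.fst h2) (congrArg Prod.snd h2)]; exact h3)
    simp only [if_neg (by simpa using hx), if_neg hne] at h1
    simpa using h1
  refine ⟨?_, hzero⟩
  -- on 𝒮 : γ * (Θ⁻¹JΘ⁻¹) = E
  have hon : ∀ x : Fin p × Fin p, x ∈ 𝒮 →
      γ * (Θ⁻¹ * J * Θ⁻¹) x.1 x.2 = E x.1 x.2 := by
    intro x hx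
    have h1 := hpt x.1 x.2
    rw [hM] at h1
    simp only [if_pos (by simpa using hx), one_mul] at h1
    linarith
  -- the matrix identity : K𝒮 *ᵥ vJ = (1/γ) • vE
  set vJ := fun x : 𝒮 => J (x : Fin p × Fin p).1 (x : Fin p × Fin p).2 with hvJ
  set vE := fun x : 𝒮 => E (x : Fin p × Fin p).1 (x : Fin p × Fin p).2 with hvE
  have hmv : K𝒮 *ᵥ vJ = (1 / γ) • vE := by
    funext x
    have hsum : (K𝒮 *ᵥ vJ) x
        = ∑ y : 𝒮, Θ⁻¹ (x : Fin p × Fin p).1 (y : Fin p × Fin p).1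
            * Θ⁻¹ (x : Fin p × Fin p).2 (y : Fin p × Fin p).2
            * J (y : Fin p × Fin p).1 (y : Fin p × Fin p).2 := by
      simp [Matrix.mulVec, dotProduct, hK𝒮, Matrix.submatrix_apply,
        Matrix.kroneckerMap_apply, hvJ]
    have hsum2 : (∑ y : 𝒮, Θ⁻¹ (x : Fin p × Fin p).1 (y : Fin p × Fin p).1
            * Θ⁻¹ (x : Fin p × Fin p).2 (y : Fin p × Fin p).2
            * J (y : Fin p × Fin p).1 (y : Fin p × Fin p).2)
        = ∑ y : Fin p × Fin p, Θ⁻¹ (x : Fin p × Fin p).1 y.1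
            * Θ⁻¹ (x : Fin p × Fin p).2 y.2 * J y.1 y.2 := by
      rw [Finset.sum_coe_sort 𝒮 (fun y => Θ⁻¹ (x : Fin p × Fin p).1 y.1
            * Θ⁻¹ (x : Fin p × Fin p).2 y.2 * J y.1 y.2)]
      refine Finset.sum_subset (Finset.subset_univ 𝒮) ?_
      intro y _ hy
      rw [hzero y hy, mul_zero]
    have hsum3 : (∑ y : Fin p × Fin p, Θ⁻¹ (x : Fin p × Fin p).1 y.1
            * Θ⁻¹ (x : Fin p × Fin p).2 y.2 * J y.1 y.2)
        = (Θ⁻¹ * J * Θ⁻¹) (x : Fin p × Fin p).1 (x : Fin p × Fin p).2 := by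
      rw [Fintype.sum_prod_type]
      rw [Matrix.mul_apply]
      simp_rw [Matrix.mul_apply, Finset.sum_mul]
      rw [Finset.sum_comm]
      refine Finset.sum_congr rfl fun a _ => Finset.sum_congr rfl fun b _ => ?_
      rw [hsym (x : Fin p × Fin p).2 a]
      ring
    have hx : (x : Fin p × Fin p) ∈ 𝒮 := x.2
    have key := hon x hx
    rw [hsum, hsum2, hsum3]
    simp only [Pi.smul_apply, smul_eq_mul, hvE]
    rw [← key, ← mul_assoc, one_div, inv_mul_cancel₀ hγ.ne', one_mul]
  -- invert
  have hdet : IsUnit K𝒮.det := (Matrix.isUnit_iff_isUnit_det K𝒮).mp hKinv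
  have : K𝒮⁻¹ *ᵥ (K𝒮 *ᵥ vJ) = K𝒮⁻¹ *ᵥ ((1 / γ) • vE) := by rw [hmv]
  rw [Matrix.mulVec_mulVec, Matrix.nonsing_inv_mul K𝒮 hdet, Matrix.one_mulVec,
    Matrix.mulVec_smul] at this
  exact this
end
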